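/- arXiv:1502.07677 — 6 statements merged into one kernel-verified Lean document; each statement's English description precedes it below -/
import Mathlib

section
/- Let 0 < α < 1, let β > −1 be real, and let a ∈ ℝ. For every x > a, the function s ↦ ∫_a^s (y−a)^β · (s−y)^(−α) dy is differentiable at x, and (1/Γ(1−α)) times its derivative at x equals (Γ(β+1)/Γ(β+1−α)) · (x−a)^(β−α). Equivalently, the Riemann–Liouville fractional derivative of order α with lower limit a of the power function (·−a)^β at x is Γ(β+1)/Γ(β+1−α) · (x−a)^(β−α). -/
open intervalIntegral MeasureTheory

lemma beta_eval_aux (α β : ℝ) (hα1 : α < 1) (hβ : -1 < β) :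
    ∫ t in (0:ℝ)..1, t ^ β * (1 - t) ^ (-α)
      = Real.Gamma (β + 1) * Real.Gamma (1 - α) / Real.Gamma (β + 2 - α) := by
  have h1 : (0:ℝ) < β + 1 := by linarith
  have h2 : (0:ℝ) < 1 - α := by linarith
  have h3 : (0:ℝ) < β + 2 - α := by linarith
  have hBeta := Complex.Gamma_mul_Gamma_eq_betaIntegral
    (s := (β + 1 : ℂ)) (t := (1 - α : ℂ))
    (by simpa using h1) (by simpa using h2)
  have hcast : (Complex.betaIntegral (β + 1) (1 - α))
      = ((∫ t in (0:ℝ)..1, t ^ β * (1 - t) ^ (-α) : ℝ) : ℂ) := by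
    rw [Complex.betaIntegral, ← intervalIntegral.integral_ofReal]
    refine intervalIntegral.integral_congr fun x hx => ?_
    rw [Set.uIcc_of_le (by norm_num)] at hx
    obtain ⟨hx0, hx1⟩ := hx
    push_cast
    rw [Complex.ofReal_cpow hx0, Complex.ofReal_cpow (by linarith)]
    push_cast
    ring_nf
  rw [hcast] at hBeta
  have hG : Real.Gamma (β + 2 - α) ≠ 0 := (Real.Gamma_pos_of_pos h3).ne'
  have hadd : (β + 1 : ℂ) + (1 - α) = ((β + 2 - α : ℝ) : ℂ) := by push_cast; ring
  rw [hadd] at hBeta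
  rw [show ((β + 1 : ℝ)) = ((β : ℝ) + 1) from rfl]
  have : ((Real.Gamma (β + 1) * Real.Gamma (1 - α) : ℝ) : ℂ)
      = ((Real.Gamma (β + 2 - α) : ℝ) : ℂ) * ((∫ t in (0:ℝ)..1, t ^ β * (1 - t) ^ (-α) : ℝ) : ℂ) := by
    push_cast
    rw [← Complex.Gamma_ofReal, ← Complex.Gamma_ofReal, ← Complex.Gamma_ofReal] at *
    push_cast at hBeta ⊢
    rw [hBeta]
  have hre : Real.Gamma (β + 1) * Real.Gamma (1 - α)
      = Real.Gamma (β + 2 - α) * ∫ t in (0:ℝ)..1, t ^ β * (1 - t) ^ (-α) := by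
    exact_mod_cast this
  field_simp
  linarith [hre]

lemma key_integral (α β a : ℝ) (x : ℝ) (hx : a < x) :
    (∫ y in a..x, (y - a) ^ β * (x - y) ^ (-α))
      = (x - a) ^ (β + 1 - α) * ∫ t in (0:ℝ)..1, t ^ β * (1 - t) ^ (-α) := by
  have hxa : (0:ℝ) < x - a := sub_pos.2 hx
  have hne : x - a ≠ 0 := hxa.ne'
  have hsub := intervalIntegral.smul_integral_comp_mul_add
    (f := fun y => (y - a) ^ β * (x - y) ^ (-α)) (a := (0:ℝ)) (b := 1) (x - a) a
  simp only [mul_zero, zero_add, mul_one, sub_add_cancel] at hsub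
  rw [← hsub]
  have hcong : ∀ t ∈ Set.uIcc (0:ℝ) 1,
      ((x - a) * t + a - a) ^ β * (x - ((x - a) * t + a)) ^ (-α)
        = ((x - a) ^ β * (x - a) ^ (-α)) * (t ^ β * (1 - t) ^ (-α)) := by
    intro t ht
    rw [Set.uIcc_of_le (by norm_num)] at ht
    obtain ⟨ht0, ht1⟩ := ht
    have e1 : (x - a) * t + a - a = (x - a) * t := by ring
    have e2 : x - ((x - a) * t + a) = (x - a) * (1 - t) := by ring
    rw [e1, e2, Real.mul_rpow hxa.le ht0, Real.mul_rpow hxa.le (by linarith)]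
    ring
  rw [intervalIntegral.integral_congr hcong, intervalIntegral.integral_const_mul]
  rw [smul_eq_mul, ← mul_assoc]
  congr 1
  rw [show β + 1 - α = 1 + (β + -α) by ring, Real.rpow_add hxa, Real.rpow_add hxa,
    Real.rpow_one]

/-- The Riemann–Liouville fractional derivative of order `α` (with `0 < α < 1`) with lower
limit `a` of the power function `y ↦ (y - a) ^ β` (with `β > -1`) at any `x > a` equals
`Γ(β+1)/Γ(β+1-α) * (x-a)^(β-α)`. -/
theorem stmt_0 (α β a : ℝ) (hα0 : 0 < α) (hα1 : α < 1) (hβ : -1 < β) :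
    ∀ x : ℝ, a < x →
      DifferentiableAt ℝ
        (fun s : ℝ => ∫ y in a..s, (y - a) ^ β * (s - y) ^ (-α)) x ∧
      (1 / Real.Gamma (1 - α)) *
          deriv (fun s : ℝ => ∫ y in a..s, (y - a) ^ β * (s - y) ^ (-α)) x
        = (Real.Gamma (β + 1) / Real.Gamma (β + 1 - α)) * (x - a) ^ (β - α) := by
  intro x hx
  set C : ℝ := ∫ t in (0:ℝ)..1, t ^ β * (1 - t) ^ (-α) with hC
  set p : ℝ := β + 1 - α with hp
  have hev : (fun s : ℝ => ∫ y in a..s, (y - a) ^ β * (s - y) ^ (-α))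
      =ᶠ[nhds x] fun s => C * (s - a) ^ p := by
    filter_upwards [Ioi_mem_nhds hx] with s hs
    rw [key_integral α β a s hs, mul_comm]
  have hxa : (0:ℝ) < x - a := sub_pos.2 hx
  have hder : HasDerivAt (fun s : ℝ => C * (s - a) ^ p) (C * (p * (x - a) ^ (p - 1))) x := by
    have h1 : HasDerivAt (fun s : ℝ => s - a) 1 x := (hasDerivAt_id x).sub_const a
    have h2 := (Real.hasDerivAt_rpow_const (x := x - a) (p := p) (Or.inl hxa.ne')).comp x h1
    simpa using h2.const_mul C
  have hdiff : DifferentiableAt ℝ (fun s : ℝ => ∫ y in a..s, (y - a) ^ β * (s - y) ^ (-α)) x :=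
    (hder.differentiableAt).congr_of_eventuallyEq hev
  refine ⟨hdiff, ?_⟩
  have hderiv : deriv (fun s : ℝ => ∫ y in a..s, (y - a) ^ β * (s - y) ^ (-α)) x
      = C * (p * (x - a) ^ (p - 1)) := by
    rw [Filter.EventuallyEq.deriv_eq hev, hder.deriv]
  rcases eq_or_ne (β + 1 - α) 0 with h0 | h0
  · rw [hderiv, hp, h0]
    simp [Real.Gamma_zero]
  · rw [hderiv, hC, beta_eval_aux α β hα1 hβ]
    have hpm : p - 1 = β - α := by rw [hp]; ring
    have hgt : (-1:ℝ) < β + 1 - α := by linarith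
    have hG1 : Real.Gamma (1 - α) ≠ 0 := (Real.Gamma_pos_of_pos (by linarith)).ne'
    have hG2 : Real.Gamma (β + 1 - α) ≠ 0 := by
      refine Real.Gamma_ne_zero fun m => ?_
      cases m with
      | zero => simpa using h0
      | succ n =>
        intro hcontra
        have : (-(n + 1 : ℕ) : ℝ) ≤ -1 := by push_cast; linarith
        rw [← hcontra] at this
        linarith
    have hGrec : Real.Gamma (β + 2 - α) = (β + 1 - α) * Real.Gamma (β + 1 - α) := by
      have := Real.Gamma_add_one h0
      rw [show β + 1 - α + 1 = β + 2 - α by ring] at this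
      exact this
    rw [hGrec, hpm, hp]
    field_simp
end

section
/- Let n ≥ 1 be a natural number, let f : ℝ^(n+2) → ℝ be smooth (C^∞), let u : [x₁, x₂] → ℝ be 2n times continuously differentiable, and let h : [x₁, x₂] → ℝ be n times continuously differentiable with h^(j)(x₁) = h^(j)(x₂) = 0 for all 0 ≤ j ≤ n−1. Then the function ε ↦ ∫_{x₁}^{x₂} f(x, u(x)+ε·h(x), u′(x)+ε·h′(x), …, u^(n)(x)+ε·h^(n)(x)) dx is differentiable at ε = 0, and its derivative at ε = 0 equals ∫_{x₁}^{x₂} Σ_{m=0}^{n} (−1)^m · (d^m/dx^m)[∂_{m+2} f(x, u(x), u′(x), …, u^(n)(x))] · h(x) dx, where ∂_{m+2} f denotes the partial derivative of f with respect to the argument occupied by u^(m), assuming for each m that x ↦ ∂_{m+2} f(x, u(x), …, u^(n)(x)) is m times differentiable. -/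
open Set MeasureTheory intervalIntegral

lemma ibp_aux (x₁ x₂ : ℝ) (h12 : x₁ < x₂) :
    ∀ (m : ℕ) (p q : ℝ → ℝ),
    ContDiffOn ℝ m p (Icc x₁ x₂) → ContDiffOn ℝ m q (Icc x₁ x₂) →
    (∀ j < m, iteratedDerivWithin j q (Icc x₁ x₂) x₁ = 0
            ∧ iteratedDerivWithin j q (Icc x₁ x₂) x₂ = 0) →
    ∫ x in x₁..x₂, p x * iteratedDerivWithin m q (Icc x₁ x₂) x
      = (-1:ℝ)^m * ∫ x in x₁..x₂, iteratedDerivWithin m p (Icc x₁ x₂) x * q x := by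
  intro m
  induction m with
  | zero => intro p q _ _ _; simp [iteratedDerivWithin_zero]
  | succ m IH =>
    intro p q hp hq hbd
    set S := Icc x₁ x₂ with hS
    have sd : UniqueDiffOn ℝ S := uniqueDiffOn_Icc h12
    have hle : x₁ ≤ x₂ := h12.le
    have huIcc : uIcc x₁ x₂ = S := uIcc_of_le hle
    set Q := iteratedDerivWithin m q S with hQ
    set p' := derivWithin p S with hp'
    set Q' := derivWithin Q S with hQ'
    -- continuity facts
    have c1 : ((m:ℕ) : ℕ∞) ≤ ((m+1:ℕ) : ℕ∞) := by exact_mod_cast Nat.le_succ m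
    have hpc : ContinuousOn p S := hp.continuousOn
    have hQc : ContinuousOn Q S :=
      hq.continuousOn_iteratedDerivWithin (by exact_mod_cast Nat.le_succ m) sd
    have hp'c : ContinuousOn p' S :=
      hp.continuousOn_derivWithin sd (by exact_mod_cast Nat.succ_le_succ (Nat.zero_le m))
    have hQ'eq : ∀ x ∈ S, Q' x = iteratedDerivWithin (m+1) q S x := fun x hx =>
      by rw [iteratedDerivWithin_succ]
    have hQ'c : ContinuousOn Q' S :=
      (hq.continuousOn_iteratedDerivWithin le_rfl sd).congr hQ'eq
    have hqc : ContinuousOn q S := hq.continuousOn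
    -- derivative of p * Q on interior
    have hderiv : ∀ x ∈ Ioo x₁ x₂,
        HasDerivAt (fun y => p y * Q y) (p' x * Q x + p x * Q' x) x := by
      intro x hx
      have hxS : S ∈ nhds x := Icc_mem_nhds hx.1 hx.2
      have hxmem : x ∈ S := Ioo_subset_Icc_self hx
      have hp1 : (1:WithTop ℕ∞) ≤ ((m+1:ℕ):WithTop ℕ∞) := by exact_mod_cast Nat.succ_le_succ (Nat.zero_le m)
      have h1 : HasDerivAt p (p' x) x :=
        (((hp.differentiableOn (by exact_mod_cast Nat.succ_ne_zero m)) x hxmem).hasDerivWithinAt).hasDerivAt hxS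
      have h2 : HasDerivAt Q (Q' x) x :=
        (((hq.differentiableOn_iteratedDerivWithin
          (by exact_mod_cast Nat.lt_succ_self m) sd) x hxmem).hasDerivWithinAt).hasDerivAt hxS
      exact h1.mul h2
    -- interval integrability
    have hint1 : IntervalIntegrable (fun x => p' x * Q x) volume x₁ x₂ :=
      ContinuousOn.intervalIntegrable (by rw [huIcc]; exact hp'c.mul hQc)
    have hint2 : IntervalIntegrable (fun x => p x * Q' x) volume x₁ x₂ :=
      ContinuousOn.intervalIntegrable (by rw [huIcc]; exact hpc.mul hQ'c)
    -- FTC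
    have hftc : ∫ x in x₁..x₂, (p' x * Q x + p x * Q' x)
        = p x₂ * Q x₂ - p x₁ * Q x₁ := by
      apply integral_eq_sub_of_hasDeriv_right_of_le hle ((hpc.mul hQc))
        (fun x hx => (hderiv x hx).hasDerivWithinAt)
      exact hint1.add hint2
    have hQx₁ : Q x₁ = 0 := (hbd m (Nat.lt_succ_self m)).1
    have hQx₂ : Q x₂ = 0 := (hbd m (Nat.lt_succ_self m)).2
    rw [integral_add hint1 hint2, hQx₁, hQx₂] at hftc
    have key : ∫ x in x₁..x₂, p x * Q' x = - ∫ x in x₁..x₂, p' x * Q x := by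
      linarith [hftc]
    have step1 : ∫ x in x₁..x₂, p x * iteratedDerivWithin (m+1) q S x
        = ∫ x in x₁..x₂, p x * Q' x := by
      apply intervalIntegral.integral_congr
      intro x hx
      rw [huIcc] at hx
      dsimp only
      rw [hQ'eq x hx]
    have hIH := IH p' q (hp.derivWithin sd (by norm_cast))
      (hq.of_le (by exact_mod_cast Nat.le_succ m))
      (fun j hj => hbd j (hj.trans (Nat.lt_succ_self m)))
    have step2 : ∫ x in x₁..x₂, iteratedDerivWithin m p' S x * q x
        = ∫ x in x₁..x₂, iteratedDerivWithin (m+1) p S x * q x := by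
      apply intervalIntegral.integral_congr
      intro x hx
      rw [huIcc] at hx
      dsimp only
      rw [iteratedDerivWithin_succ']
    rw [step1, key, hIH, step2]
    ring

/-- First variation of `F[u] = ∫_{x₁}^{x₂} f(x, u, u', …, u^(n)) dx` for smooth
`f : ℝ^(n+2) → ℝ`: the Gateaux differential at `ε = 0` in direction `h` (vanishing with
its first `n-1` derivatives at the endpoints) equals
`∫_{x₁}^{x₂} ∑_{m=0}^{n} (-1)^m (d^m/dx^m)[∂_{m+2} f(x, u, …, u^(n))] · h dx`. -/
theorem stmt_7 (n : ℕ) (hn : 1 ≤ n) (x₁ x₂ : ℝ) (h12 : x₁ < x₂)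
    (f : (Fin (n + 2) → ℝ) → ℝ) (hf : ContDiff ℝ (⊤ : ℕ∞) f)
    (u h : ℝ → ℝ)
    (hu : ContDiffOn ℝ (2 * n) u (Set.Icc x₁ x₂))
    (hh : ContDiffOn ℝ n h (Set.Icc x₁ x₂))
    (hbd : ∀ j < n, iteratedDerivWithin j h (Set.Icc x₁ x₂) x₁ = 0
                  ∧ iteratedDerivWithin j h (Set.Icc x₁ x₂) x₂ = 0)
    (hsm : ∀ m : Fin (n + 1), ContDiffOn ℝ (m : ℕ)
      (fun x : ℝ => fderiv ℝ f
        (Fin.cases x (fun k : Fin (n + 1) =>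
          iteratedDerivWithin (k : ℕ) u (Set.Icc x₁ x₂) x) : Fin (n + 2) → ℝ)
        (Pi.single m.succ 1)) (Set.Icc x₁ x₂)) :
    HasDerivAt
      (fun ε : ℝ => ∫ x in x₁..x₂,
        f (Fin.cases x (fun k : Fin (n + 1) =>
            iteratedDerivWithin (k : ℕ) u (Set.Icc x₁ x₂) x
              + ε * iteratedDerivWithin (k : ℕ) h (Set.Icc x₁ x₂) x) : Fin (n + 2) → ℝ))
      (∫ x in x₁..x₂,
        (∑ m : Fin (n + 1), (-1 : ℝ) ^ (m : ℕ) *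
          iteratedDerivWithin (m : ℕ)
            (fun y : ℝ => fderiv ℝ f
              (Fin.cases y (fun k : Fin (n + 1) =>
                iteratedDerivWithin (k : ℕ) u (Set.Icc x₁ x₂) y) : Fin (n + 2) → ℝ)
              (Pi.single m.succ 1))
            (Set.Icc x₁ x₂) x) * h x) 0 := by
  have hle : x₁ ≤ x₂ := h12.le
  have sd : UniqueDiffOn ℝ (Set.Icc x₁ x₂) := uniqueDiffOn_Icc h12
  set S := Set.Icc x₁ x₂ with hSdef
  set v : ℝ → (Fin (n + 2) → ℝ) := fun x : ℝ =>
    (Fin.cases x (fun k : Fin (n + 1) =>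
      iteratedDerivWithin (k : ℕ) u S x) : Fin (n + 2) → ℝ) with hvdef
  set w : ℝ → (Fin (n + 2) → ℝ) := fun x : ℝ =>
    (Fin.cases 0 (fun k : Fin (n + 1) =>
      iteratedDerivWithin (k : ℕ) h S x) : Fin (n + 2) → ℝ) with hwdef
  have huIcc : Set.uIcc x₁ x₂ = S := Set.uIcc_of_le hle
  have hιsub : Set.uIoc x₁ x₂ ⊆ S := by
    rw [Set.uIoc_of_le hle]; exact Set.Ioc_subset_Icc_self
  -- continuity of v and w on S
  have hvc : ContinuousOn v S := by
    rw [hvdef]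
    apply continuousOn_pi.2
    intro i
    refine Fin.cases ?_ (fun k => ?_) i
    · simpa using continuousOn_id' S
    · simp only [Fin.cases_succ]
      exact hu.continuousOn_iteratedDerivWithin
        (by exact_mod_cast (Fin.is_le k).trans (by omega)) sd
  have hwc : ContinuousOn w S := by
    rw [hwdef]
    apply continuousOn_pi.2
    intro i
    refine Fin.cases ?_ (fun k => ?_) i
    · simpa using continuousOn_const
    · simp only [Fin.cases_succ]
      exact hh.continuousOn_iteratedDerivWithin (by exact_mod_cast Fin.is_le k) sd
  -- bound on the derivative
  obtain ⟨C₁, hC₁⟩ : ∃ C, ∀ p ∈ S ×ˢ Set.Icc (-1:ℝ) 1,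
      ‖fderiv ℝ f (v p.1 + p.2 • w p.1)‖ ≤ C := by
    apply (isCompact_Icc.prod isCompact_Icc).exists_bound_of_continuousOn
    apply (hf.continuous_fderiv (by simp)).comp_continuousOn
    exact (hvc.comp continuousOn_fst (fun p hp => hp.1)).add
      (continuousOn_snd.smul (hwc.comp continuousOn_fst (fun p hp => hp.1)))
  obtain ⟨C₂, hC₂⟩ : ∃ C, ∀ x ∈ S, ‖w x‖ ≤ C :=
    isCompact_Icc.exists_bound_of_continuousOn hwc
  have hC₂0 : 0 ≤ max C₂ 0 := le_max_right _ _
  -- Step A : differentiation under the integral sign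
  have stepA : HasDerivAt (fun ε : ℝ => ∫ x in x₁..x₂, f (v x + ε • w x))
      (∫ x in x₁..x₂, fderiv ℝ f (v x + (0:ℝ) • w x) (w x)) 0 := by
    refine (intervalIntegral.hasDerivAt_integral_of_dominated_loc_of_deriv_le
      (F := fun ε x => f (v x + ε • w x))
      (F' := fun ε x => fderiv ℝ f (v x + ε • w x) (w x))
      (bound := fun _ => (max C₁ 0) * (max C₂ 0)) (Metric.ball_mem_nhds 0 one_pos) ?_ ?_ ?_ ?_ ?_ ?_).2
    · refine Filter.Eventually.of_forall (fun ε => ?_)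
      exact (hf.continuous.comp_continuousOn
        ((hvc.add (show ContinuousOn (fun x => ε • w x) S from (continuousOn_const (c := ε)).smul hwc)).mono hιsub)).aestronglyMeasurable
        measurableSet_uIoc
    · apply ContinuousOn.intervalIntegrable
      rw [huIcc]
      exact hf.continuous.comp_continuousOn (hvc.add (show ContinuousOn (fun x => (0:ℝ) • w x) S from (continuousOn_const (c := (0:ℝ))).smul hwc))
    · apply ContinuousOn.aestronglyMeasurable _ measurableSet_uIoc
      apply ContinuousOn.mono _ hιsub
      exact ContinuousOn.clm_apply
        ((hf.continuous_fderiv (by simp)).comp_continuousOn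
          (hvc.add (show ContinuousOn (fun x => (0:ℝ) • w x) S from (continuousOn_const (c := (0:ℝ))).smul hwc))) hwc
    · refine Filter.Eventually.of_forall (fun t ht ε hε => ?_)
      have htS : t ∈ S := hιsub ht
      have hεI : ε ∈ Set.Icc (-1:ℝ) 1 := by
        have := mem_ball_zero_iff.1 hε
        rw [Real.norm_eq_abs, abs_lt] at this
        exact ⟨this.1.le, this.2.le⟩
      calc ‖fderiv ℝ f (v t + ε • w t) (w t)‖
          ≤ ‖fderiv ℝ f (v t + ε • w t)‖ * ‖w t‖ := ContinuousLinearMap.le_opNorm _ _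
        _ ≤ (max C₁ 0) * (max C₂ 0) := by
            apply mul_le_mul (le_max_of_le_left (hC₁ (t, ε) ⟨htS, hεI⟩))
              (le_max_of_le_left (hC₂ t htS)) (norm_nonneg _)
              (le_max_right _ _)
    · exact intervalIntegrable_const
    · refine Filter.Eventually.of_forall (fun t ht ε hε => ?_)
      have hinner : HasDerivAt (fun ε : ℝ => v t + ε • w t) (w t) ε := by
        simpa using ((hasDerivAt_id ε).smul_const (w t)).const_add (v t)
      exact ((hf.differentiable (by simp) _).hasFDerivAt).comp_hasDerivAt ε hinner
  -- the function in the statement equals the one in stepA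
  have hfun : (fun ε : ℝ => ∫ x in x₁..x₂,
        f (Fin.cases x (fun k : Fin (n + 1) =>
            iteratedDerivWithin (k : ℕ) u S x
              + ε * iteratedDerivWithin (k : ℕ) h S x) : Fin (n + 2) → ℝ))
      = fun ε : ℝ => ∫ x in x₁..x₂, f (v x + ε • w x) := by
    funext ε
    congr 1
    funext x
    congr 1
    funext i
    refine Fin.cases ?_ (fun k => ?_) i <;>
      simp [hvdef, hwdef]
  -- pointwise expansion of the derivative integrand
  have expand : ∀ x : ℝ, fderiv ℝ f (v x) (w x)
      = ∑ m : Fin (n + 1), iteratedDerivWithin (m : ℕ) h S x *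
          fderiv ℝ f (v x) (Pi.single m.succ 1) := by
    intro x
    have hw : w x = ∑ m : Fin (n + 1),
        iteratedDerivWithin (m : ℕ) h S x • (Pi.single m.succ 1 : Fin (n + 2) → ℝ) := by
      funext i
      rw [Finset.sum_apply]
      refine Fin.cases ?_ (fun j => ?_) i
      · simp [hwdef, Pi.single_apply, (Fin.succ_ne_zero _)]
      · simp [hwdef, Pi.single_apply, Fin.succ_inj]
    rw [hw, map_sum]
    simp [smul_eq_mul]
  -- integrability of the summands
  have hgc : ∀ m : Fin (n + 1),
      ContinuousOn (fun x : ℝ => fderiv ℝ f (v x) (Pi.single m.succ 1)) S :=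
    fun m => (hsm m).continuousOn
  have hHc : ∀ m : Fin (n + 1),
      ContinuousOn (iteratedDerivWithin (m : ℕ) h S) S :=
    fun m => hh.continuousOn_iteratedDerivWithin (by exact_mod_cast Fin.is_le m) sd
  have hint : ∀ m : Fin (n + 1), IntervalIntegrable
      (fun x => iteratedDerivWithin (m : ℕ) h S x *
        fderiv ℝ f (v x) (Pi.single m.succ 1)) volume x₁ x₂ := by
    intro m
    apply ContinuousOn.intervalIntegrable
    rw [huIcc]
    exact (hHc m).mul (hgc m)
  have hint2 : ∀ m : Fin (n + 1), IntervalIntegrable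
      (fun x => iteratedDerivWithin (m : ℕ)
        (fun y : ℝ => fderiv ℝ f (v y) (Pi.single m.succ 1)) S x * h x) volume x₁ x₂ := by
    intro m
    apply ContinuousOn.intervalIntegrable
    rw [huIcc]
    exact ((hsm m).continuousOn_iteratedDerivWithin le_rfl sd).mul hh.continuousOn
  -- value of stepA's derivative equals the target
  have hval : (∫ x in x₁..x₂, fderiv ℝ f (v x + (0:ℝ) • w x) (w x))
      = ∫ x in x₁..x₂,
        (∑ m : Fin (n + 1), (-1 : ℝ) ^ (m : ℕ) *
          iteratedDerivWithin (m : ℕ)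
            (fun y : ℝ => fderiv ℝ f (v y) (Pi.single m.succ 1)) S x) * h x := by
    have e1 : (∫ x in x₁..x₂, fderiv ℝ f (v x + (0:ℝ) • w x) (w x))
        = ∫ x in x₁..x₂, ∑ m : Fin (n + 1), iteratedDerivWithin (m : ℕ) h S x *
            fderiv ℝ f (v x) (Pi.single m.succ 1) := by
      congr 1
      funext x
      rw [zero_smul, add_zero, expand x]
    rw [e1, intervalIntegral.integral_finset_sum (fun m _ => hint m)]
    have e2 : ∀ m : Fin (n + 1),
        (∫ x in x₁..x₂, iteratedDerivWithin (m : ℕ) h S x *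
            fderiv ℝ f (v x) (Pi.single m.succ 1))
        = (-1:ℝ) ^ (m : ℕ) * ∫ x in x₁..x₂, iteratedDerivWithin (m : ℕ)
            (fun y : ℝ => fderiv ℝ f (v y) (Pi.single m.succ 1)) S x * h x := by
      intro m
      have comm : (fun x => iteratedDerivWithin (m : ℕ) h S x *
            fderiv ℝ f (v x) (Pi.single m.succ 1))
          = fun x => (fun y : ℝ => fderiv ℝ f (v y) (Pi.single m.succ 1)) x *
              iteratedDerivWithin (m : ℕ) h S x := by
        funext x; ring
      rw [comm]
      exact ibp_aux x₁ x₂ h12 (m : ℕ)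
        (fun y : ℝ => fderiv ℝ f (v y) (Pi.single m.succ 1)) h
        (hsm m) (hh.of_le (by exact_mod_cast Fin.is_le m))
        (fun j hj => hbd j (lt_of_lt_of_le hj (Fin.is_le m)))
    rw [Finset.sum_congr rfl (fun m _ => e2 m)]
    have e3 : ∀ m : Fin (n + 1),
        (-1:ℝ) ^ (m : ℕ) * (∫ x in x₁..x₂, iteratedDerivWithin (m : ℕ)
            (fun y : ℝ => fderiv ℝ f (v y) (Pi.single m.succ 1)) S x * h x)
        = ∫ x in x₁..x₂, (-1:ℝ) ^ (m : ℕ) * (iteratedDerivWithin (m : ℕ)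
            (fun y : ℝ => fderiv ℝ f (v y) (Pi.single m.succ 1)) S x * h x) :=
      fun m => (intervalIntegral.integral_const_mul _ _).symm
    rw [Finset.sum_congr rfl (fun m _ => e3 m),
      ← intervalIntegral.integral_finset_sum (fun m _ => (hint2 m).const_mul _)]
    congr 1
    funext x
    rw [Finset.sum_mul]
    exact Finset.sum_congr rfl (fun m _ => by ring)
  rw [hfun, ← hval]
  exact stepA
end

section
/- Let 0 < α < 1, let A > 0, B > 0 be real, and let n ≥ 1 be a natural number. Then the limit as ε → 0⁺ of (1/Γ(1−α)) · ∫_0^ε n·α·B·t^(α−1)·(A + B·t^α)^(n−1)·(ε−t)^(−α) dt exists and equals n·Γ(α+1)·A^(n−1)·B. That is, the Caputo fractional derivative of order α of the function ε ↦ (A + B·ε^α)^n tends to n·Γ(α+1)·A^(n−1)·B as ε → 0⁺. -/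
/-!
The integrand is `t ^ (α - 1) * (ε - t) ^ (-α) * g t` with `g t = n α B (A + B t ^ α) ^ (n - 1)`
continuous. The kernel is nonnegative with total mass the beta integral `Γ(α) Γ(1 - α)`,
independent of `ε`, so as `ε → 0⁺` it concentrates at `0` and the Caputo derivative tends to
`Γ(α) g 0 = n Γ(α + 1) A ^ (n - 1) B`.
-/

open MeasureTheory Set Filter Topology

lemma intervalIntegrable_rpow_mul_rpow_sub {s t a : ℝ} (hs : 0 < s) (ht : 0 < t) (ha : 0 < a) :
    IntervalIntegrable (fun x => x ^ (s - 1) * (a - x) ^ (t - 1)) volume 0 a := by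
  refine IntervalIntegrable.trans (b := a / 2) ?_ ?_
  · refine (intervalIntegral.intervalIntegrable_rpow' (by linarith)).mul_continuousOn
      fun x hx => ?_
    rw [uIcc_of_le (by linarith)] at hx
    exact ((continuous_const.sub continuous_id).continuousAt.rpow_const
      (Or.inl (by simp only [Pi.sub_apply, id_eq]; linarith [hx.2]))).continuousWithinAt
  · have h := ((intervalIntegral.intervalIntegrable_rpow' (r := t - 1) (a := 0) (b := a / 2)
      (by linarith)).comp_sub_left a).symm
    rw [sub_zero, sub_half] at h
    refine h.continuousOn_mul fun x hx => ?_
    rw [uIcc_of_le (by linarith)] at hx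
    exact (continuousAt_id.rpow_const
      (Or.inl (by simp only [id_eq]; linarith [hx.1]))).continuousWithinAt

lemma integral_rpow_mul_rpow_sub {s t a : ℝ} (hs : 0 < s) (ht : 0 < t) (ha : 0 < a) :
    ∫ x in (0:ℝ)..a, x ^ (s - 1) * (a - x) ^ (t - 1)
      = a ^ (s + t - 1) * (Real.Gamma s * Real.Gamma t / Real.Gamma (s + t)) := by
  have hbeta := Complex.Gamma_mul_Gamma_eq_betaIntegral (s := s) (t := t)
    (by simpa using hs) (by simpa using ht)
  have hΓ : Complex.Gamma (s + t) ≠ 0 := by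
    rw [← Complex.ofReal_add, Complex.Gamma_ofReal]
    exact_mod_cast (Real.Gamma_pos_of_pos (add_pos hs ht)).ne'
  have hcast : ((∫ x in (0:ℝ)..a, x ^ (s - 1) * (a - x) ^ (t - 1) : ℝ) : ℂ)
      = ∫ x in (0:ℝ)..a, (x : ℂ) ^ ((s : ℂ) - 1) * ((a : ℂ) - x) ^ ((t : ℂ) - 1) := by
    rw [← intervalIntegral.integral_ofReal]
    refine intervalIntegral.integral_congr fun x hx => ?_
    rw [uIcc_of_le ha.le] at hx
    simp only [Complex.ofReal_mul, Complex.ofReal_cpow hx.1,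
      Complex.ofReal_cpow (sub_nonneg.2 hx.2), Complex.ofReal_sub, Complex.ofReal_one]
  have hB : Complex.betaIntegral s t
      = Complex.Gamma s * Complex.Gamma t / Complex.Gamma (s + t) := by
    rw [hbeta, mul_div_cancel_left₀ _ hΓ]
  apply Complex.ofReal_injective
  rw [hcast, Complex.betaIntegral_scaled _ _ ha, hB]
  push_cast
  rw [Complex.ofReal_cpow ha.le, ← Complex.Gamma_ofReal, ← Complex.Gamma_ofReal,
    ← Complex.Gamma_ofReal]
  push_cast
  ring

lemma norm_integral_rpow_mul_rpow_sub_mul_le {s t a m : ℝ} {f : ℝ → ℝ} (hs : 0 < s) (ht : 0 < t)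
    (ha : 0 < a) (hf : ∀ x ∈ Ioc 0 a, |f x| ≤ m) :
    ‖∫ x in (0:ℝ)..a, x ^ (s - 1) * (a - x) ^ (t - 1) * f x‖
      ≤ a ^ (s + t - 1) * (Real.Gamma s * Real.Gamma t / Real.Gamma (s + t)) * m := by
  rw [← integral_rpow_mul_rpow_sub hs ht ha, ← intervalIntegral.integral_mul_const]
  refine intervalIntegral.norm_integral_le_of_norm_le ha.le (Eventually.of_forall fun x hx => ?_)
    ((intervalIntegrable_rpow_mul_rpow_sub hs ht ha).mul_const _)
  have hK : 0 ≤ x ^ (s - 1) * (a - x) ^ (t - 1) :=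
    mul_nonneg (Real.rpow_nonneg hx.1.le _) (Real.rpow_nonneg (sub_nonneg.2 hx.2) _)
  rw [norm_mul, Real.norm_of_nonneg hK, Real.norm_eq_abs]
  exact mul_le_mul_of_nonneg_left (hf x hx) hK

lemma tendsto_integral_rpow_mul_rpow_sub_mul_div {s t : ℝ} {g : ℝ → ℝ} (hs : 0 < s) (ht : 0 < t)
    (hg : ContinuousOn g (Ici 0)) :
    Tendsto (fun a => (∫ x in (0:ℝ)..a, x ^ (s - 1) * (a - x) ^ (t - 1) * g x) / a ^ (s + t - 1))
      (𝓝[>] 0) (𝓝 (Real.Gamma s * Real.Gamma t / Real.Gamma (s + t) * g 0)) := by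
  set c := Real.Gamma s * Real.Gamma t / Real.Gamma (s + t)
  have hc : 0 < c := by
    have := Real.Gamma_pos_of_pos hs
    have := Real.Gamma_pos_of_pos ht
    have := Real.Gamma_pos_of_pos (add_pos hs ht)
    positivity
  rw [Metric.tendsto_nhdsWithin_nhds]
  intro η hη
  obtain ⟨δ, hδ, hgδ⟩ := Metric.continuousWithinAt_iff.1 (hg 0 (mem_Ici.2 le_rfl)) (η / (2 * c))
    (by positivity)
  refine ⟨δ, hδ, fun a (ha : 0 < a) haδ => ?_⟩
  rw [Real.dist_0_eq_abs, abs_of_pos ha] at haδ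
  set K := fun x => x ^ (s - 1) * (a - x) ^ (t - 1)
  have hK : IntervalIntegrable K volume 0 a := intervalIntegrable_rpow_mul_rpow_sub hs ht ha
  have hKg : IntervalIntegrable (fun x => K x * g x) volume 0 a :=
    hK.mul_continuousOn (hg.mono fun x hx => by rw [uIcc_of_le ha.le] at hx; exact hx.1)
  have hsplit : (∫ x in (0:ℝ)..a, K x * g x)
      = (∫ x in (0:ℝ)..a, K x * (g x - g 0)) + a ^ (s + t - 1) * c * g 0 := by
    simp only [mul_sub]
    rw [intervalIntegral.integral_sub hKg (hK.mul_const _), intervalIntegral.integral_mul_const,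
      integral_rpow_mul_rpow_sub hs ht ha]
    ring
  have hbound : ‖∫ x in (0:ℝ)..a, K x * (g x - g 0)‖ ≤ a ^ (s + t - 1) * c * (η / (2 * c)) := by
    refine norm_integral_rpow_mul_rpow_sub_mul_le hs ht ha fun x hx => ?_
    refine (hgδ hx.1.le ?_).le
    rw [Real.dist_0_eq_abs, abs_of_pos hx.1]
    exact hx.2.trans_lt haδ
  have hpow : 0 < a ^ (s + t - 1) := Real.rpow_pos_of_pos ha _
  rw [hsplit, Real.dist_eq, add_div, mul_assoc, mul_div_cancel_left₀ _ hpow.ne',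
    add_sub_cancel_right, abs_div, abs_of_pos hpow, div_lt_iff₀ hpow]
  calc |∫ x in (0:ℝ)..a, K x * (g x - g 0)| ≤ a ^ (s + t - 1) * c * (η / (2 * c)) := hbound
    _ = a ^ (s + t - 1) * η / 2 := by field_simp
    _ < η * a ^ (s + t - 1) := by nlinarith

theorem stmt_10_general (α A B : ℝ) (hα0 : 0 < α) (hα1 : α < 1)
    (n : ℕ) :
    Filter.Tendsto
      (fun ε : ℝ => (1 / Real.Gamma (1 - α)) *
        ∫ t in (0:ℝ)..ε,
          (n : ℝ) * α * B * t ^ (α - 1) * (A + B * t ^ α) ^ (n - 1) * (ε - t) ^ (-α))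
      (nhdsWithin 0 (Set.Ioi 0))
      (nhds ((n : ℝ) * Real.Gamma (α + 1) * A ^ (n - 1) * B)) := by
  set g : ℝ → ℝ := fun t => (n : ℝ) * α * B * (A + B * t ^ α) ^ (n - 1)
  have hg : Continuous g := by
    have := Real.continuous_rpow_const hα0.le
    fun_prop
  have key := (tendsto_integral_rpow_mul_rpow_sub_mul_div hα0 (sub_pos.2 hα1)
    hg.continuousOn).const_mul (1 / Real.Gamma (1 - α))
  simp only [add_sub_cancel, sub_sub_cancel_left, sub_self, Real.rpow_zero, div_one,
    Real.Gamma_one] at key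
  convert key using 2 with ε
  · congr 1
    refine intervalIntegral.integral_congr fun t _ => ?_
    simp only [g]
    ring
  · have := (Real.Gamma_pos_of_pos (sub_pos.2 hα1)).ne'
    simp only [g, Real.zero_rpow hα0.ne', mul_zero, add_zero, Real.Gamma_add_one hα0.ne']
    field_simp

/-- The Caputo fractional derivative of order `α` (with `0 < α < 1`) of the function
`ε ↦ (A + B ε^α)^n` tends to `n Γ(α+1) A^(n-1) B` as `ε → 0⁺`. -/
theorem stmt_10 (α A B : ℝ) (hα0 : 0 < α) (hα1 : α < 1) (hA : 0 < A) (hB : 0 < B)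
    (n : ℕ) (hn : 1 ≤ n) :
    Filter.Tendsto
      (fun ε : ℝ => (1 / Real.Gamma (1 - α)) *
        ∫ t in (0:ℝ)..ε,
          (n : ℝ) * α * B * t ^ (α - 1) * (A + B * t ^ α) ^ (n - 1) * (ε - t) ^ (-α))
      (nhdsWithin 0 (Set.Ioi 0))
      (nhds ((n : ℝ) * Real.Gamma (α + 1) * A ^ (n - 1) * B)) :=
  stmt_10_general α A B hα0 hα1 n
end

section
/- Let 0 < α < 1 and let u, h : [x₁, x₂] → ℝ be continuous and strictly positive. Then the function ε ↦ ∫_{x₁}^{x₂} ∫_{−u(x)/h(x)}^{ε} u(x)^(2−2α)·h(x)^(2α)·(t + u(x)/h(x))^(2α)·(ε−t)^(−α) dt dx is differentiable at every ε ≥ 0, and (1/Γ(1−α)) times its derivative at ε equals (Γ(2α+1)/Γ(α+1)) · ∫_{x₁}^{x₂} u(x)^(2−2α)·h(x)^(2α)·(ε + u(x)/h(x))^α dx; in particular, at ε = 0 this value equals (Γ(2α+1)/Γ(α+1)) · ∫_{x₁}^{x₂} u(x)^(2−α)·h(x)^α dx. (This is the fractional Gateaux variation δ^α F[u] of the functional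 F[u] = ∫_{x₁}^{x₂} u(x)² dx, since F[u^(1−α)·(u+εh)^α] = ∫_{x₁}^{x₂} u^(2−2α)·h^(2α)·(ε + u/h)^(2α) dx.) -/
/-!
Write `c = u / h` and `w = u ^ (2 - 2α) h ^ (2α)`. The substitution `t = -c + (s + c) τ` turns
the inner integral into a Beta integral,
`∫_{-c}^{s} (t + c) ^ (2α) (s - t) ^ (-α) dt = B(2α + 1, 1 - α) (s + c) ^ (α + 1)` for `s + c > 0`.
As `c` has a positive minimum on `[x₁, x₂]`, near any `ε ≥ 0` the double integral therefore equals
`B(2α + 1, 1 - α) ∫ w (s + c) ^ (α + 1) dx`, which is differentiated under the integral sign;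
`Γ(α + 2) = (α + 1) Γ(α + 1)` then cancels the factor `α + 1`.
-/

open MeasureTheory intervalIntegral Set Real

theorem integral_rpow_mul_sub_rpow {a s t : ℝ} (ha : 0 < a) (hs : 0 < s) (ht : 0 < t) :
    ∫ x in 0..a, x ^ (s - 1) * (a - x) ^ (t - 1)
      = a ^ (s + t - 1) * (Gamma s * Gamma t / Gamma (s + t)) := by
  have hC := Complex.betaIntegral_scaled s t ha
  rw [Complex.betaIntegral_eq_Gamma_mul_div _ _ (by simpa) (by simpa)] at hC
  have hcast : ∫ x in 0..a, (x : ℂ) ^ ((s : ℂ) - 1) * ((a : ℂ) - x) ^ ((t : ℂ) - 1)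
      = ((∫ x in 0..a, x ^ (s - 1) * (a - x) ^ (t - 1) : ℝ) : ℂ) := by
    rw [← intervalIntegral.integral_ofReal]
    refine integral_congr fun x hx => ?_
    rw [uIcc_of_le ha.le] at hx
    push_cast
    rw [Complex.ofReal_cpow hx.1, Complex.ofReal_cpow (sub_nonneg.2 hx.2)]
    push_cast; rfl
  rw [hcast, ← Complex.ofReal_add, Complex.Gamma_ofReal, Complex.Gamma_ofReal,
    Complex.Gamma_ofReal, ← Complex.ofReal_one, ← Complex.ofReal_sub,
    ← Complex.ofReal_cpow ha.le] at hC
  exact_mod_cast hC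

theorem integral_add_rpow_mul_sub_rpow {a b c s : ℝ} (ha : 0 < a) (hb : 0 < b)
    (hsc : 0 < s + c) :
    ∫ t in (-c)..s, (t + c) ^ (a - 1) * (s - t) ^ (b - 1)
      = (s + c) ^ (a + b - 1) * (Gamma a * Gamma b / Gamma (a + b)) := by
  have hshift := intervalIntegral.integral_comp_add_right
    (fun x => x ^ (a - 1) * (s + c - x) ^ (b - 1)) c (a := -c) (b := s)
  simp only [neg_add_cancel, add_sub_add_right_eq_sub] at hshift
  rw [hshift]
  exact integral_rpow_mul_sub_rpow hsc ha hb

theorem hasDerivAt_integral_mul_add_rpow {a b p ε : ℝ} {w c : ℝ → ℝ}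
    (hw : ContinuousOn w (uIcc a b)) (hc : ContinuousOn c (uIcc a b)) (hp : 1 ≤ p) :
    HasDerivAt (fun s => ∫ x in a..b, w x * (s + c x) ^ p)
      (p * ∫ x in a..b, w x * (ε + c x) ^ (p - 1)) ε := by
  have hF : ∀ s, ContinuousOn (fun x => w x * (s + c x) ^ p) (uIcc a b) := fun s =>
    hw.mul ((continuousOn_const.add hc).rpow_const fun _ _ => Or.inr (by linarith))
  have hF' : ContinuousOn (fun q : ℝ × ℝ => p * (w q.2 * (q.1 + c q.2) ^ (p - 1)))
      (Metric.closedBall ε 1 ×ˢ uIcc a b) :=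
    continuousOn_const.mul ((hw.comp continuousOn_snd fun _ hq => hq.2).mul
      ((continuousOn_fst.add (hc.comp continuousOn_snd fun _ hq => hq.2)).rpow_const
        fun _ _ => Or.inr (by linarith)))
  obtain ⟨C, hC⟩ :=
    ((isCompact_closedBall ε 1).prod isCompact_uIcc).exists_bound_of_continuousOn hF'
  have key := hasDerivAt_integral_of_dominated_loc_of_deriv_le (μ := volume)
    (F' := fun s x => p * (w x * (s + c x) ^ (p - 1))) (bound := fun _ => C)
    (Metric.ball_mem_nhds ε one_pos)
    (.of_forall fun s => ((hF s).mono uIoc_subset_uIcc).aestronglyMeasurable measurableSet_uIoc)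
    ((hF ε).intervalIntegrable)
    ((hF'.comp (continuousOn_const.prodMk continuousOn_id) fun x hx =>
      ⟨Metric.mem_closedBall_self zero_le_one, hx⟩).mono uIoc_subset_uIcc
        |>.aestronglyMeasurable measurableSet_uIoc)
    (.of_forall fun x hx s hs =>
      hC (s, x) ⟨Metric.ball_subset_closedBall hs, uIoc_subset_uIcc hx⟩)
    intervalIntegrable_const
    (.of_forall fun x _ s _ => by
      simpa [mul_comm, mul_assoc, mul_left_comm] using
        (((hasDerivAt_id s).add_const (c x)).rpow_const (Or.inr hp)).const_mul (w x))
  simpa only [intervalIntegral.integral_const_mul] using key.2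

theorem integral_add_rpow_two_mul_mul_sub_rpow_neg {α c s : ℝ} (hα0 : 0 < α) (hα1 : α < 1)
    (hsc : 0 < s + c) :
    ∫ t in (-c)..s, (t + c) ^ (2 * α) * (s - t) ^ (-α)
      = (s + c) ^ (α + 1) * (Gamma (2 * α + 1) * Gamma (1 - α) / Gamma (α + 2)) := by
  have h := integral_add_rpow_mul_sub_rpow (a := 2 * α + 1) (b := 1 - α) (by linarith)
    (by linarith) hsc
  rwa [add_sub_cancel_right, sub_sub_cancel_left, show 2 * α + 1 + (1 - α) = α + 2 by ring,
    show α + 2 - 1 = α + 1 by ring] at h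

theorem rpow_two_sub_two_mul_mul_rpow_two_mul_mul_div_rpow {a b α : ℝ} (ha : 0 < a)
    (hb : 0 < b) : a ^ (2 - 2 * α) * b ^ (2 * α) * (a / b) ^ α = a ^ (2 - α) * b ^ α := by
  rw [div_rpow ha.le hb.le, show 2 - α = 2 - 2 * α + α by ring, rpow_add ha,
    show 2 * α = α + α by ring, rpow_add hb]
  have := (rpow_pos_of_pos hb α).ne'
  field_simp

theorem hasDerivAt_integral_integral_add_rpow_mul_sub_rpow_neg {a b α ε : ℝ} {w c : ℝ → ℝ}
    (hα0 : 0 < α) (hα1 : α < 1) (hw : ContinuousOn w (uIcc a b))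
    (hc : ContinuousOn c (uIcc a b)) (hc_pos : ∀ x ∈ uIcc a b, 0 < c x) (hε : 0 ≤ ε) :
    HasDerivAt
      (fun s => ∫ x in a..b, ∫ t in (-c x)..s, w x * (t + c x) ^ (2 * α) * (s - t) ^ (-α))
      (Gamma (1 - α) * (Gamma (2 * α + 1) / Gamma (α + 1)) * ∫ x in a..b, w x * (ε + c x) ^ α)
      ε := by
  have hconst : Gamma (2 * α + 1) * Gamma (1 - α) / Gamma (α + 2) * (α + 1)
      = Gamma (1 - α) * (Gamma (2 * α + 1) / Gamma (α + 1)) := by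
    have := (Gamma_pos_of_pos (by linarith : 0 < α + 1)).ne'
    rw [show α + 2 = α + 1 + 1 by ring, Gamma_add_one (s := α + 1) (by linarith)]
    field_simp
  have hG := (hasDerivAt_integral_mul_add_rpow (p := α + 1) (ε := ε) hw hc
    (by linarith)).const_mul (Gamma (2 * α + 1) * Gamma (1 - α) / Gamma (α + 2))
  rw [add_sub_cancel_right, ← mul_assoc, hconst] at hG
  refine hG.congr_of_eventuallyEq ?_
  obtain ⟨y, hy, hmin⟩ := isCompact_uIcc.exists_isMinOn nonempty_uIcc hc
  filter_upwards [eventually_gt_nhds (by linarith [hc_pos y hy] : -c y < ε)] with s hs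
  rw [← intervalIntegral.integral_const_mul]
  refine integral_congr fun x hx => ?_
  simp only [mul_assoc, intervalIntegral.integral_const_mul]
  rw [integral_add_rpow_two_mul_mul_sub_rpow_neg hα0 hα1
    (by linarith [show c y ≤ c x from hmin hx])]
  ring

/-- The fractional Gateaux variation `δ^α F[u]` of the functional
`F[u] = ∫_{x₁}^{x₂} u(x)² dx`: for every `ε ≥ 0` the function
`s ↦ ∫_{x₁}^{x₂} ∫_{-u/h}^{s} u^(2-2α) h^(2α) (t + u/h)^(2α) (s-t)^(-α) dt dx`
is differentiable, `1/Γ(1-α)` times its derivative at `ε` equals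
`(Γ(2α+1)/Γ(α+1)) ∫ u^(2-2α) h^(2α) (ε + u/h)^α dx`, and at `ε = 0` this value is
`(Γ(2α+1)/Γ(α+1)) ∫ u^(2-α) h^α dx`. -/
theorem stmt_11 (α x₁ x₂ : ℝ) (hα0 : 0 < α) (hα1 : α < 1) (h12 : x₁ ≤ x₂)
    (u h : ℝ → ℝ)
    (hu : ContinuousOn u (Set.Icc x₁ x₂)) (hh : ContinuousOn h (Set.Icc x₁ x₂))
    (hupos : ∀ x ∈ Set.Icc x₁ x₂, 0 < u x) (hhpos : ∀ x ∈ Set.Icc x₁ x₂, 0 < h x) :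
    (∀ ε : ℝ, 0 ≤ ε →
      DifferentiableAt ℝ
        (fun s : ℝ => ∫ x in x₁..x₂, ∫ t in (-(u x / h x))..s,
          u x ^ (2 - 2 * α) * h x ^ (2 * α) * (t + u x / h x) ^ (2 * α) * (s - t) ^ (-α)) ε ∧
      (1 / Real.Gamma (1 - α)) *
          deriv (fun s : ℝ => ∫ x in x₁..x₂, ∫ t in (-(u x / h x))..s,
            u x ^ (2 - 2 * α) * h x ^ (2 * α) * (t + u x / h x) ^ (2 * α) * (s - t) ^ (-α)) ε
        = (Real.Gamma (2 * α + 1) / Real.Gamma (α + 1)) *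
            ∫ x in x₁..x₂, u x ^ (2 - 2 * α) * h x ^ (2 * α) * (ε + u x / h x) ^ α) ∧
    (1 / Real.Gamma (1 - α)) *
        deriv (fun s : ℝ => ∫ x in x₁..x₂, ∫ t in (-(u x / h x))..s,
          u x ^ (2 - 2 * α) * h x ^ (2 * α) * (t + u x / h x) ^ (2 * α) * (s - t) ^ (-α)) 0
      = (Real.Gamma (2 * α + 1) / Real.Gamma (α + 1)) *
          ∫ x in x₁..x₂, u x ^ (2 - α) * h x ^ α := by
  rw [← uIcc_of_le h12] at hu hh hupos hhpos
  have hderiv := fun ε (hε : 0 ≤ ε) => hasDerivAt_integral_integral_add_rpow_mul_sub_rpow_neg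
    (w := fun x => u x ^ (2 - 2 * α) * h x ^ (2 * α)) (c := fun x => u x / h x)
    hα0 hα1 ((hu.rpow_const fun x hx => .inl (hupos x hx).ne').mul
      (hh.rpow_const fun x hx => .inl (hhpos x hx).ne'))
    (hu.div hh fun x hx => (hhpos x hx).ne') (fun x hx => div_pos (hupos x hx) (hhpos x hx)) hε
  have hΓ : Gamma (1 - α) ≠ 0 := (Gamma_pos_of_pos (sub_pos.2 hα1)).ne'
  refine ⟨fun ε hε => ⟨(hderiv ε hε).differentiableAt, ?_⟩, ?_⟩
  · rw [(hderiv ε hε).deriv, one_div, ← mul_assoc, ← mul_assoc, inv_mul_cancel₀ hΓ, one_mul]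
  · rw [(hderiv 0 le_rfl).deriv, one_div, ← mul_assoc, ← mul_assoc, inv_mul_cancel₀ hΓ, one_mul]
    refine congrArg _ (integral_congr fun x hx => ?_)
    rw [zero_add]
    exact rpow_two_sub_two_mul_mul_rpow_two_mul_mul_div_rpow (hupos x hx) (hhpos x hx)
end

section
/- Let 0 < α < 1 and c > 0. For every ε > −c, the function s ↦ ∫_{−c}^{s} t·(t+c)^(2α−1)·(s−t)^(−α) dt is differentiable at ε, and (1/Γ(1−α)) times its derivative at ε equals (Γ(2α+1)/Γ(α+1))·(ε+c)^α − c·(Γ(2α)/Γ(α))·(ε+c)^(α−1); in particular, at ε = 0 this value equals (α·Γ(2α)/Γ(α+1))·c^α. That is, the fractional derivative of order α with base point −c of the function ε ↦ ε·(ε+c)^(2α−1), evaluated at ε = 0, equals α·Γ(2α)/Γ(α+1) · c^α. -/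
open MeasureTheory intervalIntegral Real

lemma aux_intble {p q x : ℝ} (hp : -1 < p) (hq : -1 < q) (hx : 0 < x) :
    IntervalIntegrable (fun u : ℝ => u ^ p * (x - u) ^ q) volume 0 x := by
  have half : ∀ p q : ℝ, -1 < p →
      IntervalIntegrable (fun u : ℝ => u ^ p * (x - u) ^ q) volume 0 (x / 2) := by
    intro p q hp
    apply (intervalIntegral.intervalIntegrable_rpow' hp).mul_continuousOn
    intro u hu
    rw [Set.uIcc_of_le (by linarith)] at hu
    have hne : x - u ≠ 0 := by have := hu.2; intro h; nlinarith
    exact ((Real.continuousAt_rpow_const _ _ (Or.inl hne)).comp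
      ((continuous_const.sub continuous_id).continuousAt)).continuousWithinAt
  have h2 : IntervalIntegrable (fun u : ℝ => u ^ p * (x - u) ^ q) volume (x / 2) x := by
    have := (half q p hq).comp_sub_left x
    have e1 : x - 0 = x := by ring
    have e2 : x - x / 2 = x / 2 := by ring
    rw [e1, e2] at this
    have : IntervalIntegrable (fun u : ℝ => (x - u) ^ q * u ^ p) volume x (x / 2) := by
      convert this using 2 with u
      rw [sub_sub_cancel]
    have := this.symm
    convert this using 2 with u
    ring
  exact (half p q hp).trans h2

lemma aux_beta01 {p q : ℝ} (hp : 0 < p) (hq : 0 < q) :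
    ∫ u in (0:ℝ)..1, u ^ (p - 1) * (1 - u) ^ (q - 1)
      = Real.Gamma p * Real.Gamma q / Real.Gamma (p + q) := by
  have h := Complex.Gamma_mul_Gamma_eq_betaIntegral (s := (p : ℂ)) (t := (q : ℂ))
    (by simpa using hp) (by simpa using hq)
  have hint : Complex.betaIntegral p q
      = ((∫ u in (0:ℝ)..1, u ^ (p - 1) * (1 - u) ^ (q - 1) : ℝ) : ℂ) := by
    rw [← intervalIntegral.integral_ofReal, Complex.betaIntegral]
    apply intervalIntegral.integral_congr
    intro u hu
    rw [Set.uIcc_of_le zero_le_one] at hu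
    show (u:ℂ) ^ ((p:ℂ) - 1) * (1 - (u:ℂ)) ^ ((q:ℂ) - 1) = ((u ^ (p - 1) * (1 - u) ^ (q - 1) : ℝ) : ℂ)
    rw [Complex.ofReal_mul, Complex.ofReal_cpow hu.1,
      Complex.ofReal_cpow (by linarith [hu.2] : (0:ℝ) ≤ 1 - u)]
    push_cast
    ring
  rw [hint, ← Complex.ofReal_add, Complex.Gamma_ofReal, Complex.Gamma_ofReal,
    Complex.Gamma_ofReal, ← Complex.ofReal_mul, ← Complex.ofReal_mul] at h
  have h' := Complex.ofReal_inj.mp h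
  have hG : Real.Gamma (p + q) ≠ 0 := (Real.Gamma_pos_of_pos (by linarith)).ne'
  field_simp
  linarith [h']

lemma aux_beta {a b x : ℝ} (ha : -1 < a) (hb : -1 < b) (hx : 0 < x) :
    ∫ u in (0:ℝ)..x, u ^ a * (x - u) ^ b
      = Real.Gamma (a + 1) * Real.Gamma (b + 1) / Real.Gamma (a + b + 2) * x ^ (a + b + 1) := by
  have h := intervalIntegral.smul_integral_comp_mul_left
    (f := fun u : ℝ => u ^ a * (x - u) ^ b) (a := 0) (b := 1) x
  rw [mul_zero, mul_one] at h
  rw [← h]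
  have hcong : ∫ u in (0:ℝ)..1, (x * u) ^ a * (x - x * u) ^ b
      = ∫ u in (0:ℝ)..1, x ^ a * x ^ b * (u ^ a * (1 - u) ^ b) := by
    apply intervalIntegral.integral_congr
    intro u hu
    rw [Set.uIcc_of_le zero_le_one] at hu
    show (x * u) ^ a * (x - x * u) ^ b = x ^ a * x ^ b * (u ^ a * (1 - u) ^ b)
    rw [show x - x * u = x * (1 - u) by ring, Real.mul_rpow hx.le hu.1,
      Real.mul_rpow hx.le (by linarith [hu.2])]
    ring
  rw [hcong, intervalIntegral.integral_const_mul]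
  have hbeta : ∫ u in (0:ℝ)..1, u ^ a * (1 - u) ^ b
      = Real.Gamma (a + 1) * Real.Gamma (b + 1) / Real.Gamma (a + b + 2) := by
    have := aux_beta01 (p := a + 1) (q := b + 1) (by linarith) (by linarith)
    simp only [add_sub_cancel_right] at this
    rw [this]
    ring_nf
  rw [hbeta]
  rw [smul_eq_mul, show x ^ (a + b + 1) = x * (x ^ a * x ^ b) by
    rw [← Real.rpow_add hx, Real.rpow_add_one hx.ne' (a + b), mul_comm]]
  ring
lemma aux_closed (α c : ℝ) (hα0 : 0 < α) (hα1 : α < 1) (hc : 0 < c)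
    {s : ℝ} (hs : -c < s) :
    (∫ t in (-c)..s, t * (t + c) ^ (2 * α - 1) * (s - t) ^ (-α))
      = Real.Gamma (2 * α + 1) * Real.Gamma (1 - α) / Real.Gamma (α + 2) * (s + c) ^ (α + 1)
        - c * (Real.Gamma (2 * α) * Real.Gamma (1 - α) / Real.Gamma (α + 1)) * (s + c) ^ α := by
  set x := s + c with hxdef
  have hx : 0 < x := by simp only [hxdef]; linarith
  have step1 : (∫ t in (-c)..s, t * (t + c) ^ (2 * α - 1) * (s - t) ^ (-α))
      = ∫ u in (0:ℝ)..x, (u - c) * u ^ (2 * α - 1) * (x - u) ^ (-α) := by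
    have h := intervalIntegral.integral_comp_sub_right (a := 0) (b := x)
      (fun t => t * (t + c) ^ (2 * α - 1) * (s - t) ^ (-α)) c
    rw [zero_sub, show x - c = s by rw [hxdef]; ring] at h
    rw [← h]
    apply intervalIntegral.integral_congr
    intro u _
    show (u - c) * (u - c + c) ^ (2 * α - 1) * (s - (u - c)) ^ (-α) = _
    rw [sub_add_cancel, show s - (u - c) = x - u by rw [hxdef]; ring]
  rw [step1]
  have step2 : ∫ u in (0:ℝ)..x, (u - c) * u ^ (2 * α - 1) * (x - u) ^ (-α)
      = (∫ u in (0:ℝ)..x, u ^ (2 * α) * (x - u) ^ (-α))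
        - c * ∫ u in (0:ℝ)..x, u ^ (2 * α - 1) * (x - u) ^ (-α) := by
    rw [← intervalIntegral.integral_const_mul,
      ← intervalIntegral.integral_sub (aux_intble (by linarith) (by linarith) hx)
        ((aux_intble (p := 2 * α - 1) (by linarith) (by linarith) hx).const_mul c)]
    apply intervalIntegral.integral_congr
    intro u hu
    rw [Set.uIcc_of_le hx.le] at hu
    show (u - c) * u ^ (2 * α - 1) * (x - u) ^ (-α)
      = u ^ (2 * α) * (x - u) ^ (-α) - c * (u ^ (2 * α - 1) * (x - u) ^ (-α))
    have : u ^ (2 * α) = u ^ (2 * α - 1) * u := by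
      rw [show (2 * α) = (2 * α - 1) + 1 by ring, Real.rpow_add' hu.1 (by linarith),
        Real.rpow_one]
      norm_num
    rw [this]; ring
  rw [step2, aux_beta (by linarith) (by linarith) hx,
    aux_beta (a := 2 * α - 1) (by linarith) (by linarith) hx]
  rw [show 2 * α + -α + 2 = α + 2 by ring, show 2 * α + -α + 1 = α + 1 by ring,
    show 2 * α - 1 + -α + 2 = α + 1 by ring, show 2 * α - 1 + -α + 1 = α by ring,
    show 2 * α - 1 + 1 = 2 * α by ring, show -α + 1 = 1 - α by ring]
  ring

/-- The fractional derivative of order `α` (with `0 < α < 1`) with base point `-c` of the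
function `ε ↦ ε (ε + c)^(2α-1)` at `ε > -c` equals
`Γ(2α+1)/Γ(α+1) (ε+c)^α - c Γ(2α)/Γ(α) (ε+c)^(α-1)`; at `ε = 0` this value equals
`α Γ(2α)/Γ(α+1) · c^α`. -/
theorem stmt_14 (α c : ℝ) (hα0 : 0 < α) (hα1 : α < 1) (hc : 0 < c) :
    (∀ ε : ℝ, -c < ε →
      DifferentiableAt ℝ
        (fun s : ℝ => ∫ t in (-c)..s, t * (t + c) ^ (2 * α - 1) * (s - t) ^ (-α)) ε ∧
      (1 / Real.Gamma (1 - α)) *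
          deriv (fun s : ℝ => ∫ t in (-c)..s, t * (t + c) ^ (2 * α - 1) * (s - t) ^ (-α)) ε
        = Real.Gamma (2 * α + 1) / Real.Gamma (α + 1) * (ε + c) ^ α
          - c * (Real.Gamma (2 * α) / Real.Gamma α) * (ε + c) ^ (α - 1)) ∧
    (1 / Real.Gamma (1 - α)) *
        deriv (fun s : ℝ => ∫ t in (-c)..s, t * (t + c) ^ (2 * α - 1) * (s - t) ^ (-α)) 0
      = α * Real.Gamma (2 * α) / Real.Gamma (α + 1) * c ^ α := by
  set B1 := Real.Gamma (2 * α + 1) * Real.Gamma (1 - α) / Real.Gamma (α + 2) with hB1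
  set B2 := Real.Gamma (2 * α) * Real.Gamma (1 - α) / Real.Gamma (α + 1) with hB2
  have key : ∀ ε : ℝ, -c < ε →
      DifferentiableAt ℝ
        (fun s : ℝ => ∫ t in (-c)..s, t * (t + c) ^ (2 * α - 1) * (s - t) ^ (-α)) ε ∧
      (1 / Real.Gamma (1 - α)) *
          deriv (fun s : ℝ => ∫ t in (-c)..s, t * (t + c) ^ (2 * α - 1) * (s - t) ^ (-α)) ε
        = Real.Gamma (2 * α + 1) / Real.Gamma (α + 1) * (ε + c) ^ α
          - c * (Real.Gamma (2 * α) / Real.Gamma α) * (ε + c) ^ (α - 1) := by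
    intro ε hε
    have hεc : (0:ℝ) < ε + c := by linarith
    have hev : (fun s : ℝ => ∫ t in (-c)..s, t * (t + c) ^ (2 * α - 1) * (s - t) ^ (-α))
        =ᶠ[nhds ε] fun s : ℝ => B1 * (s + c) ^ (α + 1) - c * B2 * (s + c) ^ α := by
      filter_upwards [Ioi_mem_nhds hε] with s hs
      rw [aux_closed α c hα0 hα1 hc hs]
    have hadd : HasDerivAt (fun s : ℝ => s + c) 1 ε := (hasDerivAt_id ε).add_const c
    have h1 : HasDerivAt (fun s : ℝ => (s + c) ^ (α + 1))
        ((α + 1) * (ε + c) ^ α * 1) ε := by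
      have := hadd.rpow_const (p := α + 1) (Or.inl hεc.ne')
      simpa using this
    have h2 : HasDerivAt (fun s : ℝ => (s + c) ^ α)
        (α * (ε + c) ^ (α - 1) * 1) ε := by
      simpa using hadd.rpow_const (p := α) (Or.inl hεc.ne')
    have hF : HasDerivAt (fun s : ℝ => B1 * (s + c) ^ (α + 1) - c * B2 * (s + c) ^ α)
        (B1 * ((α + 1) * (ε + c) ^ α * 1) - c * B2 * (α * (ε + c) ^ (α - 1) * 1)) ε :=
      (h1.const_mul B1).sub (h2.const_mul (c * B2))
    constructor
    · rw [hev.differentiableAt_iff]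
      exact hF.differentiableAt
    · rw [hev.deriv_eq, hF.deriv]
      have hG1 : Real.Gamma (1 - α) ≠ 0 := (Real.Gamma_pos_of_pos (by linarith)).ne'
      have hGα : Real.Gamma α ≠ 0 := (Real.Gamma_pos_of_pos hα0).ne'
      have hGα1 : Real.Gamma (α + 1) = α * Real.Gamma α := Real.Gamma_add_one hα0.ne'
      have hGα2 : Real.Gamma (α + 2) = (α + 1) * Real.Gamma (α + 1) := by
        rw [show α + 2 = (α + 1) + 1 by ring, Real.Gamma_add_one (by linarith)]
      rw [hB1, hB2, hGα2, hGα1]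
      have hGα1ne : α * Real.Gamma α ≠ 0 := mul_ne_zero hα0.ne' hGα
      field_simp
  refine ⟨key, ?_⟩
  have h0 := (key 0 (by linarith)).2
  rw [h0, zero_add]
  have hG2α : Real.Gamma (2 * α + 1) = 2 * α * Real.Gamma (2 * α) :=
    Real.Gamma_add_one (by positivity)
  have hGα1 : Real.Gamma (α + 1) = α * Real.Gamma α := Real.Gamma_add_one hα0.ne'
  have hcc : c * c ^ (α - 1) = c ^ α := by
    rw [show α = (α - 1) + 1 by ring, Real.rpow_add_one hc.ne']
    ring
  have hGα : Real.Gamma α ≠ 0 := (Real.Gamma_pos_of_pos hα0).ne'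
  rw [hG2α, hGα1]
  have hsub : c * (Real.Gamma (2 * α) / Real.Gamma α) * c ^ (α - 1)
      = Real.Gamma (2 * α) / Real.Gamma α * c ^ α := by rw [← hcc]; ring
  rw [hsub]
  field_simp
  ring
end

section
/- (Proposition 2) Let 0 < α < 1 and let u, h : [x₁, x₂] → ℝ be continuously differentiable and strictly positive. For t ≥ −u(x)/h(x) set g(x,t) = (1−α)·u(x)^(1−2α)·h(x)^(2α)·(t + u(x)/h(x))^(2α)·u′(x) + α·u(x)^(2−2α)·h(x)^(2α−1)·(t + u(x)/h(x))^(2α−1)·u′(x) + α·u(x)^(2−2α)·h(x)^(2α−1)·(t + u(x)/h(x))^(2α−1)·t·h′(x), which is the x-derivative of u^(1−α)(u+th)^α multiplied by u^(1−α)(u+th)^α. Then the function ε ↦ ∫_{x₁}^{x₂} ∫_{−u(x)/h(x)}^{ε} g(x,t)·(ε−t)^(−α) dt dx is differentiable at ε = 0, and (1/Γ(1−α)) times its derivative at ε = 0 equals ∫_{x₁}^{x₂} [((1−α)·Γ(2α+1)/Γ(α+1) + α·Γ(2α)/Γ(α))·u(x)^(1−α)·h(x)^α·u′(x) + (α²·Γ(2α)/Γ(α+1))·u(x)^(2−α)·h(x)^(α−1)·h′(x)]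 dx. (This is the fractional Gateaux variation δ^α F[u] of the functional F[u] = ∫_{x₁}^{x₂} u(x)·u′(x) dx; for α = 1 it reduces to the classical first variation ∫ (u′·h + u·h′) dx.) -/
/-!
Writing `r = u/h`, the identity `t (t + r)^(2α-1) = (t + r)^(2α) - r (t + r)^(2α-1)` makes the
integrand `g(x,t)` a combination `P (t + r)^(2α) + Q (t + r)^(2α-1)`. Against `(s - t)^(-α)` on
`[-r, s]` each power gives a Beta integral, so the inner integral is
`P B(2α+1, 1-α) (s + r)^(α+1) + Q B(2α, 1-α) (s + r)^α`. Since `r` is bounded below by a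
positive constant, this closed form holds for all `s` near `0` and can be differentiated under the
outer integral; `Γ(z+1) = z Γ(z)` then turns the coefficients into the stated ones.
-/

open MeasureTheory Set Metric

theorem integral_rpow_mul_one_sub_rpow {p q : ℝ} (hp : 0 < p) (hq : 0 < q) :
    ∫ v in (0 : ℝ)..1, v ^ (p - 1) * (1 - v) ^ (q - 1)
      = Real.Gamma p * Real.Gamma q / Real.Gamma (p + q) := by
  apply Complex.ofReal_injective
  rw [← intervalIntegral.integral_ofReal]
  push_cast [← Complex.Gamma_ofReal]
  rw [← Complex.betaIntegral_eq_Gamma_mul_div _ _ (by simpa) (by simpa)]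
  refine intervalIntegral.integral_congr fun v hv => ?_
  rw [uIcc_of_le zero_le_one] at hv
  rw [Complex.ofReal_cpow hv.1, Complex.ofReal_cpow (sub_nonneg.2 hv.2)]
  push_cast
  rfl

theorem integral_sub_rpow_mul_sub_rpow {a b p q : ℝ} (hab : a < b) (hp : 0 < p) (hq : 0 < q) :
    ∫ t in a..b, (t - a) ^ (p - 1) * (b - t) ^ (q - 1)
      = Real.Gamma p * Real.Gamma q / Real.Gamma (p + q) * (b - a) ^ (p + q - 1) := by
  have hba : 0 < b - a := sub_pos.2 hab
  have hsub := intervalIntegral.smul_integral_comp_mul_add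
    (fun t => (t - a) ^ (p - 1) * (b - t) ^ (q - 1)) (a := 0) (b := 1) (b - a) a
  simp only [mul_zero, zero_add, mul_one, sub_add_cancel, smul_eq_mul] at hsub
  rw [← hsub, ← integral_rpow_mul_one_sub_rpow hp hq, ← intervalIntegral.integral_mul_const,
    ← intervalIntegral.integral_const_mul]
  refine intervalIntegral.integral_congr fun v hv => ?_
  rw [uIcc_of_le zero_le_one] at hv
  rw [show (b - a) * v + a - a = (b - a) * v by ring,
    show b - ((b - a) * v + a) = (b - a) * (1 - v) by ring,
    Real.mul_rpow hba.le hv.1, Real.mul_rpow hba.le (sub_nonneg.2 hv.2),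
    show p + q - 1 = (p - 1) + (q - 1) + 1 by ring, Real.rpow_add hba, Real.rpow_add hba,
    Real.rpow_one]
  ring

theorem intervalIntegrable_sub_rpow_mul_sub_rpow {a b p q : ℝ} (hab : a < b) (hp : 0 < p)
    (hq : 0 < q) :
    IntervalIntegrable (fun t => (t - a) ^ (p - 1) * (b - t) ^ (q - 1)) volume a b := by
  by_contra hint
  -- a non-integrable function has integral `0`, but this integral is positive
  have hpos : 0 < Real.Gamma p * Real.Gamma q / Real.Gamma (p + q) * (b - a) ^ (p + q - 1) :=
    mul_pos (div_pos (mul_pos (Real.Gamma_pos_of_pos hp) (Real.Gamma_pos_of_pos hq))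
      (Real.Gamma_pos_of_pos (add_pos hp hq))) (Real.rpow_pos_of_pos (sub_pos.2 hab) _)
  rw [← integral_sub_rpow_mul_sub_rpow hab hp hq, intervalIntegral.integral_undef hint] at hpos
  exact hpos.false

theorem integral_add_rpow_mul_sub_rpow_neg {α p r s : ℝ} (hα1 : α < 1) (hp : 0 < p)
    (hrs : 0 < s + r) :
    ∫ t in -r..s, (t + r) ^ (p - 1) * (s - t) ^ (-α)
      = Real.Gamma p * Real.Gamma (1 - α) / Real.Gamma (p + 1 - α) * (s + r) ^ (p - α) := by
  have h := integral_sub_rpow_mul_sub_rpow (a := -r) (b := s) (by linarith) hp (q := 1 - α)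
    (by linarith)
  simp only [sub_neg_eq_add, sub_sub_cancel_left] at h
  rw [h]
  ring_nf

theorem intervalIntegrable_add_rpow_mul_sub_rpow_neg {α p r s : ℝ} (hα1 : α < 1) (hp : 0 < p)
    (hrs : 0 < s + r) :
    IntervalIntegrable (fun t => (t + r) ^ (p - 1) * (s - t) ^ (-α)) volume (-r) s := by
  have h := intervalIntegrable_sub_rpow_mul_sub_rpow (a := -r) (b := s) (by linarith) hp
    (q := 1 - α) (by linarith)
  simpa only [sub_neg_eq_add, sub_sub_cancel_left] using h

theorem integral_mul_rpow_add_mul_rpow_mul_sub_rpow {α P Q r s : ℝ} (hα0 : 0 < α)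
    (hα1 : α < 1) (hrs : 0 < s + r) :
    ∫ t in -r..s, (P * (t + r) ^ (2 * α) + Q * (t + r) ^ (2 * α - 1)) * (s - t) ^ (-α)
      = P * (Real.Gamma (2 * α + 1) * Real.Gamma (1 - α) / Real.Gamma (α + 2))
          * (s + r) ^ (α + 1)
        + Q * (Real.Gamma (2 * α) * Real.Gamma (1 - α) / Real.Gamma (α + 1)) * (s + r) ^ α := by
  have hp₁ : (0 : ℝ) < 2 * α + 1 := by linarith
  have hp₂ : (0 : ℝ) < 2 * α := by linarith
  have h₁ := integral_add_rpow_mul_sub_rpow_neg hα1 hp₁ hrs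
  have i₁ := intervalIntegrable_add_rpow_mul_sub_rpow_neg hα1 hp₁ hrs
  rw [add_sub_cancel_right] at h₁ i₁
  have h₂ := integral_add_rpow_mul_sub_rpow_neg hα1 hp₂ hrs
  have i₂ := intervalIntegrable_add_rpow_mul_sub_rpow_neg hα1 hp₂ hrs
  simp_rw [add_mul, mul_assoc]
  rw [intervalIntegral.integral_add (i₁.const_mul P) (i₂.const_mul Q),
    intervalIntegral.integral_const_mul, intervalIntegral.integral_const_mul, h₁, h₂]
  ring_nf

theorem hasDerivAt_intervalIntegral_of_continuousOn {F F' : ℝ → ℝ → ℝ} {a b s₀ δ : ℝ}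
    (hδ : 0 < δ) (hF : ∀ s ∈ ball s₀ δ, ContinuousOn (F s) (uIcc a b))
    (hF' : ContinuousOn (Function.uncurry F') (closedBall s₀ δ ×ˢ uIcc a b))
    (hderiv : ∀ s ∈ ball s₀ δ, ∀ x ∈ uIcc a b, HasDerivAt (F · x) (F' s x) s) :
    HasDerivAt (fun s => ∫ x in a..b, F s x) (∫ x in a..b, F' s₀ x) s₀ := by
  obtain ⟨K, hK⟩ :=
    ((isCompact_closedBall s₀ δ).prod isCompact_uIcc).exists_bound_of_continuousOn hF'
  have hs₀ : s₀ ∈ ball s₀ δ := mem_ball_self hδ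
  have hF's₀ : ContinuousOn (F' s₀) (uIcc a b) :=
    hF'.comp (continuousOn_const.prodMk continuousOn_id) fun x hx =>
      ⟨ball_subset_closedBall hs₀, hx⟩
  refine (intervalIntegral.hasDerivAt_integral_of_dominated_loc_of_deriv_le (bound := fun _ => K)
    (ball_mem_nhds s₀ hδ) ?_ ((hF s₀ hs₀).intervalIntegrable)
    ((hF's₀.mono uIoc_subset_uIcc).aestronglyMeasurable measurableSet_uIoc) ?_
    intervalIntegrable_const ?_).2
  · filter_upwards [ball_mem_nhds s₀ hδ] with s hs
    exact ((hF s hs).mono uIoc_subset_uIcc).aestronglyMeasurable measurableSet_uIoc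
  · exact ae_of_all _ fun x hx s hs =>
      hK (s, x) ⟨ball_subset_closedBall hs, uIoc_subset_uIcc hx⟩
  · exact ae_of_all _ fun x hx s hs => hderiv s hs x (uIoc_subset_uIcc hx)

theorem exists_pos_forall_closedBall_add_pos {c : ℝ → ℝ} {a b : ℝ}
    (hc : ContinuousOn c (uIcc a b)) (hpos : ∀ x ∈ uIcc a b, 0 < c x) :
    ∃ δ > 0, ∀ s ∈ closedBall (0 : ℝ) δ, ∀ x ∈ uIcc a b, 0 < s + c x := by
  obtain ⟨x₀, hx₀, hmin⟩ := isCompact_uIcc.exists_isMinOn nonempty_uIcc hc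
  refine ⟨c x₀ / 2, half_pos (hpos x₀ hx₀), fun s hs x hx => ?_⟩
  have hs' := neg_le_of_abs_le (mem_closedBall_zero_iff.1 hs)
  linarith [isMinOn_iff.1 hmin x hx, hpos x₀ hx₀]

theorem hasDerivAt_intervalIntegral_mul_rpow_add_mul_rpow {A C c : ℝ → ℝ} {a b p q : ℝ}
    (hA : ContinuousOn A (uIcc a b)) (hC : ContinuousOn C (uIcc a b))
    (hc : ContinuousOn c (uIcc a b)) (hcpos : ∀ x ∈ uIcc a b, 0 < c x) :
    HasDerivAt (fun s => ∫ x in a..b, A x * (s + c x) ^ p + C x * (s + c x) ^ q)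
      (∫ x in a..b, A x * (p * c x ^ (p - 1)) + C x * (q * c x ^ (q - 1))) 0 := by
  obtain ⟨δ, hδ, hδpos⟩ := exists_pos_forall_closedBall_add_pos hc hcpos
  have key := hasDerivAt_intervalIntegral_of_continuousOn
    (F := fun s x => A x * (s + c x) ^ p + C x * (s + c x) ^ q)
    (F' := fun s x => A x * (p * (s + c x) ^ (p - 1)) + C x * (q * (s + c x) ^ (q - 1)))
    (a := a) (b := b) (s₀ := 0) hδ ?_ ?_ ?_
  · simpa only [zero_add] using key
  · intro s hs
    have hne : ∀ x ∈ uIcc a b, s + c x ≠ 0 := fun x hx =>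
      (hδpos s (ball_subset_closedBall hs) x hx).ne'
    have hbase := (continuousOn_const (c := s)).add hc
    exact (hA.mul (hbase.rpow_const fun x hx => Or.inl (hne x hx))).add
      (hC.mul (hbase.rpow_const fun x hx => Or.inl (hne x hx)))
  · have hne : ∀ z ∈ closedBall (0 : ℝ) δ ×ˢ uIcc a b, z.1 + c z.2 ≠ 0 := fun z hz =>
      (hδpos z.1 hz.1 z.2 hz.2).ne'
    have hsnd : ∀ {f : ℝ → ℝ}, ContinuousOn f (uIcc a b) →
        ContinuousOn (fun z : ℝ × ℝ => f z.2) (closedBall (0 : ℝ) δ ×ˢ uIcc a b) :=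
      fun hf => hf.comp continuousOn_snd fun z hz => hz.2
    have hpow : ∀ p : ℝ, ContinuousOn (fun z : ℝ × ℝ => (z.1 + c z.2) ^ p)
        (closedBall (0 : ℝ) δ ×ˢ uIcc a b) := fun p =>
      (continuousOn_fst.add (hsnd hc)).rpow_const fun z hz => Or.inl (hne z hz)
    exact ((hsnd hA).mul (continuousOn_const.mul (hpow _))).add
      ((hsnd hC).mul (continuousOn_const.mul (hpow _)))
  · intro s hs x hx
    have hne : s + c x ≠ 0 := (hδpos s (ball_subset_closedBall hs) x hx).ne'
    have hbase : HasDerivAt (· + c x) 1 s := (hasDerivAt_id s).add_const (c x)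
    have h := ((hbase.rpow_const (p := p) (Or.inl hne)).const_mul (A x)).add
      ((hbase.rpow_const (p := q) (Or.inl hne)).const_mul (C x))
    rw [one_mul, one_mul] at h
    exact h

/-- The paper's `g(x,t)`, with `U, H, U', H'` standing for `u x, h x, u' x, h' x`. -/
noncomputable def fracIntegrand (α U H U' H' t : ℝ) : ℝ :=
  (1 - α) * U ^ (1 - 2 * α) * H ^ (2 * α) * (t + U / H) ^ (2 * α) * U'
    + α * U ^ (2 - 2 * α) * H ^ (2 * α - 1) * (t + U / H) ^ (2 * α - 1) * U'
    + α * U ^ (2 - 2 * α) * H ^ (2 * α - 1) * (t + U / H) ^ (2 * α - 1) * t * H'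

noncomputable def fracCoeff₁ (α U H U' H' : ℝ) : ℝ :=
  (1 - α) * U ^ (1 - 2 * α) * H ^ (2 * α) * U' + α * U ^ (2 - 2 * α) * H ^ (2 * α - 1) * H'

noncomputable def fracCoeff₂ (α U H U' H' : ℝ) : ℝ :=
  α * U ^ (2 - 2 * α) * H ^ (2 * α - 1) * (U' - U / H * H')

theorem fracIntegrand_eq {α U H U' H' t : ℝ} (hα0 : 0 < α) (ht : 0 ≤ t + U / H) :
    fracIntegrand α U H U' H' t
      = fracCoeff₁ α U H U' H' * (t + U / H) ^ (2 * α)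
        + fracCoeff₂ α U H U' H' * (t + U / H) ^ (2 * α - 1) := by
  have hpow : (t + U / H) ^ (2 * α) = (t + U / H) ^ (2 * α - 1) * (t + U / H) := by
    rw [← Real.rpow_add_one' ht (by linarith), sub_add_cancel]
  unfold fracIntegrand fracCoeff₁ fracCoeff₂
  linear_combination -(α * U ^ (2 - 2 * α) * H ^ (2 * α - 1) * H') * hpow

theorem integral_fracIntegrand_mul_sub_rpow {α U H U' H' s : ℝ} (hα0 : 0 < α) (hα1 : α < 1)
    (hs : 0 < s + U / H) :
    ∫ t in -(U / H)..s, fracIntegrand α U H U' H' t * (s - t) ^ (-α)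
      = fracCoeff₁ α U H U' H' * (Real.Gamma (2 * α + 1) * Real.Gamma (1 - α)
            / Real.Gamma (α + 2)) * (s + U / H) ^ (α + 1)
        + fracCoeff₂ α U H U' H' * (Real.Gamma (2 * α) * Real.Gamma (1 - α)
            / Real.Gamma (α + 1)) * (s + U / H) ^ α := by
  rw [← integral_mul_rpow_add_mul_rpow_mul_sub_rpow hα0 hα1 hs]
  refine intervalIntegral.integral_congr fun t ht => ?_
  rw [uIcc_of_le (by linarith)] at ht
  simp only [fracIntegrand_eq hα0 (neg_le_iff_add_nonneg.1 ht.1)]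

theorem fracCoeff_combination {α U H U' H' : ℝ} (hα0 : 0 < α) (hα1 : α < 1) (hU : 0 < U)
    (hH : 0 < H) :
    fracCoeff₁ α U H U' H'
        * (Real.Gamma (2 * α + 1) * Real.Gamma (1 - α) / Real.Gamma (α + 2))
        * ((α + 1) * (U / H) ^ α)
      + fracCoeff₂ α U H U' H'
        * (Real.Gamma (2 * α) * Real.Gamma (1 - α) / Real.Gamma (α + 1))
        * (α * (U / H) ^ (α - 1))
    = Real.Gamma (1 - α) *
        (((1 - α) * Real.Gamma (2 * α + 1) / Real.Gamma (α + 1)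
            + α * Real.Gamma (2 * α) / Real.Gamma α) * U ^ (1 - α) * H ^ α * U'
          + (α ^ 2 * Real.Gamma (2 * α) / Real.Gamma (α + 1)) * U ^ (2 - α) * H ^ (α - 1)
            * H') := by
  have hU₁ : U ^ (1 - 2 * α) = U / (U ^ α) ^ 2 := by
    rw [show 1 - 2 * α = 1 - α - α by ring, Real.rpow_sub hU, Real.rpow_sub hU, Real.rpow_one]
    ring
  have hU₂ : U ^ (2 - 2 * α) = U ^ 2 / (U ^ α) ^ 2 := by
    rw [show 2 - 2 * α = 2 - α - α by ring, Real.rpow_sub hU, Real.rpow_sub hU,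
      Real.rpow_two]
    ring
  have hU₃ : U ^ (1 - α) = U / U ^ α := by rw [Real.rpow_sub hU, Real.rpow_one]
  have hU₄ : U ^ (2 - α) = U ^ 2 / U ^ α := by rw [Real.rpow_sub hU, Real.rpow_two]
  have hU₅ : U ^ (α - 1) = U ^ α / U := by rw [Real.rpow_sub hU, Real.rpow_one]
  have hH₁ : H ^ (2 * α) = (H ^ α) ^ 2 := by
    rw [show 2 * α = α + α by ring, Real.rpow_add hH]; ring
  have hH₂ : H ^ (2 * α - 1) = (H ^ α) ^ 2 / H := by rw [Real.rpow_sub hH, Real.rpow_one, hH₁]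
  have hH₃ : H ^ (α - 1) = H ^ α / H := by rw [Real.rpow_sub hH, Real.rpow_one]
  have hΓα : Real.Gamma (α + 1) = α * Real.Gamma α := Real.Gamma_add_one hα0.ne'
  have hΓα2 : Real.Gamma (α + 2) = (α + 1) * (α * Real.Gamma α) := by
    rw [show α + 2 = (α + 1) + 1 by ring, Real.Gamma_add_one (by positivity), hΓα]
  have hΓ2α : Real.Gamma (2 * α + 1) = 2 * α * Real.Gamma (2 * α) :=
    Real.Gamma_add_one (by positivity)
  have hΓ := (Real.Gamma_pos_of_pos hα0).ne'
  have hΓ1 := (Real.Gamma_pos_of_pos (sub_pos.2 hα1)).ne'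
  unfold fracCoeff₁ fracCoeff₂
  rw [Real.div_rpow hU.le hH.le, Real.div_rpow hU.le hH.le, hU₁, hU₂, hU₃, hU₄, hU₅, hH₁,
    hH₂, hH₃, hΓα2, hΓ2α, hΓα]
  field_simp
  ring

theorem hasDerivAt_integral_integral_fracIntegrand {α a b : ℝ} (hα0 : 0 < α) (hα1 : α < 1)
    {u h u' h' : ℝ → ℝ} (hu : ContinuousOn u (uIcc a b)) (hh : ContinuousOn h (uIcc a b))
    (hu' : ContinuousOn u' (uIcc a b)) (hh' : ContinuousOn h' (uIcc a b))
    (hupos : ∀ x ∈ uIcc a b, 0 < u x) (hhpos : ∀ x ∈ uIcc a b, 0 < h x) :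
    HasDerivAt (fun s => ∫ x in a..b, ∫ t in -(u x / h x)..s,
        fracIntegrand α (u x) (h x) (u' x) (h' x) t * (s - t) ^ (-α))
      (Real.Gamma (1 - α) * ∫ x in a..b,
        (((1 - α) * Real.Gamma (2 * α + 1) / Real.Gamma (α + 1)
            + α * Real.Gamma (2 * α) / Real.Gamma α) * u x ^ (1 - α) * h x ^ α * u' x
          + (α ^ 2 * Real.Gamma (2 * α) / Real.Gamma (α + 1)) * u x ^ (2 - α) * h x ^ (α - 1)
            * h' x)) 0 := by
  have hr : ContinuousOn (fun x => u x / h x) (uIcc a b) :=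
    hu.div hh fun x hx => (hhpos x hx).ne'
  have hrpos : ∀ x ∈ uIcc a b, 0 < u x / h x := fun x hx => div_pos (hupos x hx) (hhpos x hx)
  have hup : ∀ p : ℝ, ContinuousOn (fun x => u x ^ p) (uIcc a b) :=
    fun p => hu.rpow_const fun x hx => Or.inl (hupos x hx).ne'
  have hhp : ∀ p : ℝ, ContinuousOn (fun x => h x ^ p) (uIcc a b) :=
    fun p => hh.rpow_const fun x hx => Or.inl (hhpos x hx).ne'
  have hc₁ : ContinuousOn (fun x => fracCoeff₁ α (u x) (h x) (u' x) (h' x)) (uIcc a b) :=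
    (((continuousOn_const.mul (hup _)).mul (hhp _)).mul hu').add
      (((continuousOn_const.mul (hup _)).mul (hhp _)).mul hh')
  have hc₂ : ContinuousOn (fun x => fracCoeff₂ α (u x) (h x) (u' x) (h' x)) (uIcc a b) :=
    ((continuousOn_const.mul (hup _)).mul (hhp _)).mul (hu'.sub (hr.mul hh'))
  obtain ⟨δ, hδ, hδpos⟩ := exists_pos_forall_closedBall_add_pos hr hrpos
  have hclosed : (fun s => ∫ x in a..b, ∫ t in -(u x / h x)..s,
        fracIntegrand α (u x) (h x) (u' x) (h' x) t * (s - t) ^ (-α))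
      =ᶠ[nhds 0] fun s => ∫ x in a..b,
        fracCoeff₁ α (u x) (h x) (u' x) (h' x) * (Real.Gamma (2 * α + 1) * Real.Gamma (1 - α)
            / Real.Gamma (α + 2)) * (s + u x / h x) ^ (α + 1)
        + fracCoeff₂ α (u x) (h x) (u' x) (h' x) * (Real.Gamma (2 * α) * Real.Gamma (1 - α)
            / Real.Gamma (α + 1)) * (s + u x / h x) ^ α := by
    filter_upwards [ball_mem_nhds 0 hδ] with s hs
    exact intervalIntegral.integral_congr fun x hx =>
      integral_fracIntegrand_mul_sub_rpow hα0 hα1 (hδpos s (ball_subset_closedBall hs) x hx)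
  refine ((hasDerivAt_intervalIntegral_mul_rpow_add_mul_rpow (hc₁.mul continuousOn_const)
    (hc₂.mul continuousOn_const) hr hrpos).congr_of_eventuallyEq hclosed).congr_deriv ?_
  rw [← intervalIntegral.integral_const_mul]
  refine intervalIntegral.integral_congr fun x hx => ?_
  simp only [add_sub_cancel_right]
  exact fracCoeff_combination hα0 hα1 (hupos x hx) (hhpos x hx)

/-- (Proposition 2) The fractional Gateaux variation `δ^α F[u]` of the functional
`F[u] = ∫_{x₁}^{x₂} u(x) u'(x) dx`: with
`g(x,t) = (1-α) u^(1-2α) h^(2α) (t + u/h)^(2α) u' + α u^(2-2α) h^(2α-1) (t + u/h)^(2α-1) u'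
  + α u^(2-2α) h^(2α-1) (t + u/h)^(2α-1) t h'`,
the function `ε ↦ ∫_{x₁}^{x₂} ∫_{-u/h}^{ε} g(x,t) (ε-t)^(-α) dt dx` is differentiable at
`ε = 0` and `1/Γ(1-α)` times its derivative there equals
`∫ [((1-α) Γ(2α+1)/Γ(α+1) + α Γ(2α)/Γ(α)) u^(1-α) h^α u'
   + (α² Γ(2α)/Γ(α+1)) u^(2-α) h^(α-1) h'] dx`. -/
theorem stmt_15 (α x₁ x₂ : ℝ) (hα0 : 0 < α) (hα1 : α < 1) (h12 : x₁ < x₂)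
    (u h : ℝ → ℝ)
    (hu : ContDiffOn ℝ 1 u (Set.Icc x₁ x₂)) (hh : ContDiffOn ℝ 1 h (Set.Icc x₁ x₂))
    (hupos : ∀ x ∈ Set.Icc x₁ x₂, 0 < u x) (hhpos : ∀ x ∈ Set.Icc x₁ x₂, 0 < h x) :
    DifferentiableAt ℝ
      (fun s : ℝ => ∫ x in x₁..x₂, ∫ t in (-(u x / h x))..s,
        ((1 - α) * u x ^ (1 - 2 * α) * h x ^ (2 * α) * (t + u x / h x) ^ (2 * α) *
            derivWithin u (Set.Icc x₁ x₂) x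
          + α * u x ^ (2 - 2 * α) * h x ^ (2 * α - 1) * (t + u x / h x) ^ (2 * α - 1) *
              derivWithin u (Set.Icc x₁ x₂) x
          + α * u x ^ (2 - 2 * α) * h x ^ (2 * α - 1) * (t + u x / h x) ^ (2 * α - 1) *
              t * derivWithin h (Set.Icc x₁ x₂) x) * (s - t) ^ (-α)) 0 ∧
    (1 / Real.Gamma (1 - α)) *
        deriv (fun s : ℝ => ∫ x in x₁..x₂, ∫ t in (-(u x / h x))..s,
          ((1 - α) * u x ^ (1 - 2 * α) * h x ^ (2 * α) * (t + u x / h x) ^ (2 * α) *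
              derivWithin u (Set.Icc x₁ x₂) x
            + α * u x ^ (2 - 2 * α) * h x ^ (2 * α - 1) * (t + u x / h x) ^ (2 * α - 1) *
                derivWithin u (Set.Icc x₁ x₂) x
            + α * u x ^ (2 - 2 * α) * h x ^ (2 * α - 1) * (t + u x / h x) ^ (2 * α - 1) *
                t * derivWithin h (Set.Icc x₁ x₂) x) * (s - t) ^ (-α)) 0
      = ∫ x in x₁..x₂,
          (((1 - α) * Real.Gamma (2 * α + 1) / Real.Gamma (α + 1)
              + α * Real.Gamma (2 * α) / Real.Gamma α) *
            u x ^ (1 - α) * h x ^ α * derivWithin u (Set.Icc x₁ x₂) x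
          + (α ^ 2 * Real.Gamma (2 * α) / Real.Gamma (α + 1)) *
              u x ^ (2 - α) * h x ^ (α - 1) * derivWithin h (Set.Icc x₁ x₂) x) := by
  have hI : uIcc x₁ x₂ ⊆ Icc x₁ x₂ := (uIcc_of_le h12.le).subset
  have hderiv := hasDerivAt_integral_integral_fracIntegrand hα0 hα1 (hu.continuousOn.mono hI)
    (hh.continuousOn.mono hI)
    ((hu.continuousOn_derivWithin (uniqueDiffOn_Icc h12) le_rfl).mono hI)
    ((hh.continuousOn_derivWithin (uniqueDiffOn_Icc h12) le_rfl).mono hI)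
    (fun x hx => hupos x (hI hx)) (fun x hx => hhpos x (hI hx))
  unfold fracIntegrand at hderiv
  have hΓ : Real.Gamma (1 - α) ≠ 0 := (Real.Gamma_pos_of_pos (sub_pos.2 hα1)).ne'
  exact ⟨hderiv.differentiableAt, by rw [hderiv.deriv, one_div, inv_mul_cancel_left₀ hΓ]⟩
end
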